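/- For every ε > 0 there exists δ > 0 such that the following holds. Let G = (V1, V2, E) be a bipartite graph with |V1| ≥ |V2|/2 and let P = {x₀, x₁, …, x_{|V2|^{0.5}}} be an ε-pair-star of size |V2|^{0.5} rooted at x₀ in V1. If W ⊆ V2 is chosen uniformly at random, then with probability at least 3/4 the set A = {d^W(x_i) − d^W(x₀) : i ∈ [|V2|^{0.5}]} ∩ [−3|V2|^{0.5}, 3|V2|^{0.5}] has size at least δ|V2|^{0.5}. -/

import Mathlib

open Finset

def nbr {V1 V2 : Type} [Fintype V2] (E : V1 → V2 → Prop) [∀ a b, Decidable (E a b)]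
    (u : V1) : Finset V2 := Finset.univ.filter (fun v => E u v)

def IsPairStar {V1 V2 : Type} [Fintype V2] [DecidableEq V2]
    (E : V1 → V2 → Prop) [∀ a b, Decidable (E a b)] (ε : ℝ) (k : ℕ)
    (x : Fin (k + 1) → V1) : Prop :=
  Function.Injective x ∧
  (∀ j : Fin (k + 1), |((nbr E (x j)).card : ℝ) - ((nbr E (x 0)).card : ℝ)| ≤
      Real.sqrt (Fintype.card V2)) ∧
  (∀ i j : Fin (k + 1), i ≠ j →
      ε * Fintype.card V2 ≤ ((symmDiff (nbr E (x i)) (nbr E (x j))).card : ℝ))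

/-!
Write `z_i(W) = d^W(x_i) - d^W(x₀)` and `n = |V2|`. For `i ≠ j` the event `z_i = z_j` says
`|N(x_i) ∩ W| = |N(x_j) ∩ W|`; once `W` is fixed outside `A = N(x_i) \ N(x_j)` it pins down
`|A ∩ W|`, so its probability is at most a middle binomial coefficient over `2^|A|`, i.e.
`O(1/√|A|)`. One of the two orders has `|A| ≥ εn/2`, so the expected number of colliding
ordered pairs is `O(k/√ε)` with `k = ⌊√n⌋`. On the other hand `2 z_i` is the degree difference
`d(x_i) - d(x₀)`, at most `√n` in size, plus a centred sum of `±1`s of variance at most `n`, so by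
Chebyshev `z_i` leaves `[-3√n, 3√n]` with probability at most `1/25`. By Markov, with probability
at least `1 - 1/16 - 2/25 > 3/4` at least `k/2` indices stay in the window and there are
`O(k/√ε)` collisions, and Cauchy–Schwarz then forces `Ω(√ε k)` distinct values among them.
-/

theorem Nat.centralBinom_sq_mul_le (t : ℕ) : t.centralBinom ^ 2 * (2 * t + 1) ≤ 16 ^ t := by
  induction t with
  | zero => simp
  | succ t ih =>
    -- consecutive terms have ratio `4 (2t+1) (2t+3) / (t+1)^2 ≤ 16`
    refine Nat.le_of_mul_le_mul_left ?_ (by positivity : 0 < (t + 1) ^ 2 * (2 * t + 1))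
    calc (t + 1) ^ 2 * (2 * t + 1) * ((t + 1).centralBinom ^ 2 * (2 * (t + 1) + 1))
        = ((t + 1) * (t + 1).centralBinom) ^ 2 * ((2 * t + 1) * (2 * t + 3)) := by ring
      _ = (t.centralBinom ^ 2 * (2 * t + 1)) * (4 * (2 * t + 1) ^ 2 * (2 * t + 3)) := by
          rw [Nat.succ_mul_centralBinom_succ]; ring
      _ ≤ 16 ^ t * (16 * ((t + 1) ^ 2 * (2 * t + 1))) := Nat.mul_le_mul ih (by nlinarith)
      _ = (t + 1) ^ 2 * (2 * t + 1) * 16 ^ (t + 1) := by ring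

theorem Nat.choose_half_sq_mul_le (m : ℕ) : m.choose (m / 2) ^ 2 * (m + 1) ≤ 4 ^ m := by
  obtain ⟨t, rfl | rfl⟩ := Nat.even_or_odd' m
  · rw [Nat.mul_div_cancel_left t two_pos, ← Nat.centralBinom_eq_two_mul_choose, pow_mul]
    exact Nat.centralBinom_sq_mul_le t
  · have hsplit : (t + 1).centralBinom = 2 * (2 * t + 1).choose t := by
      rw [Nat.centralBinom_eq_two_mul_choose, show 2 * (t + 1) = 2 * t + 1 + 1 by ring,
        Nat.choose_succ_succ, Nat.choose_symm_half]
      ring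
    have h := Nat.centralBinom_sq_mul_le (t + 1)
    have h16 : 16 ^ (t + 1) = 4 * 4 ^ (2 * t + 1) := by
      rw [pow_succ, pow_succ, pow_mul]; norm_num; ring
    rw [hsplit, h16] at h
    rw [show (2 * t + 1) / 2 = t by omega]
    nlinarith

theorem Nat.choose_half_le (m : ℕ) : (m.choose (m / 2) : ℝ) ≤ 2 ^ m / √(m + 1) := by
  rw [le_div_iff₀ (by positivity)]
  refine le_of_pow_le_pow_left₀ two_ne_zero (by positivity) ?_
  rw [mul_pow, Real.sq_sqrt (by positivity), ← pow_mul, mul_comm m, pow_mul]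
  exact_mod_cast Nat.choose_half_sq_mul_le m

theorem card_filter_lt_le_of_sum_le {γ : Type*} [Fintype γ] (f : γ → ℝ) (hf : ∀ a, 0 ≤ f a)
    {t M : ℝ} (ht : 0 < t) (h : ∑ a, f a ≤ t * M) : (#{a | t < f a} : ℝ) ≤ M := by
  refine le_of_mul_le_mul_left ?_ ht
  calc t * #{a | t < f a} = ∑ _a ∈ {a | t < f a}, t := by
        rw [sum_const, nsmul_eq_mul, mul_comm]
    _ ≤ ∑ a ∈ {a | t < f a}, f a := sum_le_sum fun a ha ↦ (mem_filter.1 ha).2.le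
    _ ≤ ∑ a, f a := sum_le_sum_of_subset_of_nonneg (subset_univ _) fun a _ _ ↦ hf a
    _ ≤ t * M := h

theorem sum_card_filter_comm {γ δ : Type*} [Fintype δ] (s : Finset γ) (P : γ → δ → Prop)
    [∀ a b, Decidable (P a b)] : ∑ b, #{a ∈ s | P a b} = ∑ a ∈ s, #{b | P a b} := by
  simp only [card_filter]
  exact sum_comm

section SetFamily

variable {α : Type*} [DecidableEq α]

def rademacher (W : Finset α) (v : α) : ℝ := if v ∈ W then 1 else -1

theorem sum_rademacher (s W : Finset α) : ∑ v ∈ s, rademacher W v = 2 * #(s ∩ W) - #s := by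
  have h : ∀ v, rademacher W v = 2 * (if v ∈ W then 1 else 0) - 1 := fun v ↦ by
    unfold rademacher; split_ifs <;> norm_num
  simp [h, sum_sub_distrib]
  ring

variable [Fintype α]

theorem card_filter_card_inter_eq_le (A : Finset α) (f : Finset α → ℕ) :
    #{W : Finset α | #(W ∩ A) = f (W \ A)} ≤
      (#A).choose (#A / 2) * 2 ^ (Fintype.card α - #A) := by
  have hmaps : ∀ W ∈ ({W : Finset α | #(W ∩ A) = f (W \ A)} : Finset _),
      W \ A ∈ Aᶜ.powerset := fun W _ ↦ by
    simp [subset_iff]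
  rw [card_eq_sum_card_fiberwise hmaps]
  calc ∑ U ∈ Aᶜ.powerset, #{W ∈ {W : Finset α | #(W ∩ A) = f (W \ A)} | W \ A = U}
      ≤ ∑ U ∈ Aᶜ.powerset, (#A).choose (#A / 2) := sum_le_sum fun U _ ↦ ?_
    _ = (#A).choose (#A / 2) * 2 ^ (Fintype.card α - #A) := by
        rw [sum_const, card_powerset, card_compl, smul_eq_mul, mul_comm]
  -- inside a fiber, `W` is determined by `W ∩ A`, a subset of `A` of the prescribed size `f U`
  calc #{W ∈ {W : Finset α | #(W ∩ A) = f (W \ A)} | W \ A = U}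
      ≤ #(A.powersetCard (f U)) := by
        refine card_le_card_of_injOn (· ∩ A) (fun W hW ↦ ?_) (fun W₁ hW₁ W₂ hW₂ hEq ↦ ?_)
        · simp only [coe_filter, mem_filter, mem_univ, true_and, Set.mem_ofPred_eq] at hW
          simp [mem_powersetCard, ← hW.2, hW.1]
        · simp only [coe_filter, mem_filter, mem_univ, true_and, Set.mem_ofPred_eq] at hW₁ hW₂
          rw [← sdiff_union_inter W₁ A, ← sdiff_union_inter W₂ A, hW₁.2, hW₂.2]
          exact congrArg (U ∪ ·) hEq
    _ ≤ (#A).choose (#A / 2) := by rw [card_powersetCard]; exact Nat.choose_le_middle _ _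

theorem card_filter_card_inter_eq_card_inter_le (s t : Finset α) :
    (#{W : Finset α | #(s ∩ W) = #(t ∩ W)} : ℝ) ≤ 2 ^ Fintype.card α / √(#(s \ t) + 1) := by
  set A := s \ t
  -- once `W \ A` is fixed, the equation determines `#(W ∩ A)`
  have hsub : ({W : Finset α | #(s ∩ W) = #(t ∩ W)} : Finset _) ⊆
      ({W | #(W ∩ A) = #(t ∩ (W \ A)) - #(s ∩ (W \ A))} : Finset _) := by
    intro W
    simp only [mem_filter, mem_univ, true_and]
    intro hW
    have hs : #(W ∩ A) + #(s ∩ (W \ A)) = #(s ∩ W) := by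
      rw [← card_union_of_disjoint (by grind [disjoint_left])]
      congr 1; grind
    have ht : t ∩ (W \ A) = t ∩ W := by grind
    rw [ht]
    omega
  calc (#{W : Finset α | #(s ∩ W) = #(t ∩ W)} : ℝ)
      ≤ (#A).choose (#A / 2) * 2 ^ (Fintype.card α - #A) := by
        exact_mod_cast (card_le_card hsub).trans
          (card_filter_card_inter_eq_le A fun U ↦ #(t ∩ U) - #(s ∩ U))
    _ ≤ 2 ^ #A / √(#A + 1) * 2 ^ (Fintype.card α - #A) := by
        gcongr; exact Nat.choose_half_le _
    _ = 2 ^ Fintype.card α / √(#A + 1) := by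
        rw [div_mul_eq_mul_div, ← pow_add, Nat.add_sub_cancel' (card_le_univ A)]

theorem card_filter_card_inter_eq_card_inter_le_symmDiff (s t : Finset α) :
    (#{W : Finset α | #(s ∩ W) = #(t ∩ W)} : ℝ) ≤
      2 ^ Fintype.card α / √(#(symmDiff s t) / 2 + 1) := by
  have hsd : (#(symmDiff s t) : ℝ) = #(s \ t) + #(t \ s) := by
    rw [symmDiff_def, sup_eq_union, card_union_of_disjoint disjoint_sdiff_sdiff, Nat.cast_add]
  rcases le_total #(t \ s) #(s \ t) with h | h
  · refine (card_filter_card_inter_eq_card_inter_le s t).trans ?_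
    gcongr
    rw [hsd]
    linarith [(Nat.cast_le (α := ℝ)).2 h]
  · simp_rw [eq_comm (a := #(s ∩ _))]
    refine (card_filter_card_inter_eq_card_inter_le t s).trans ?_
    gcongr
    rw [hsd]
    linarith [(Nat.cast_le (α := ℝ)).2 h]

theorem sum_rademacher_mul_rademacher (v w : α) :
    ∑ W : Finset α, rademacher W v * rademacher W w =
      if v = w then 2 ^ Fintype.card α else 0 := by
  split_ifs with hvw
  · subst hvw
    simp [rademacher, apply_ite (fun x : ℝ ↦ x * x), Fintype.card_finset]
  · set F : Finset α → ℝ := fun W ↦ rademacher W v * rademacher W w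
    have hflip : ∀ W, F (symmDiff W {w}) = -F W := fun W ↦ by
      by_cases hw : w ∈ W <;> simp [F, rademacher, mem_symmDiff, hvw, hw]
    have hinv : Function.Involutive fun W : Finset α ↦ symmDiff W {w} :=
      fun W ↦ symmDiff_symmDiff_cancel_right _ _
    have h := Equiv.sum_comp hinv.toPerm F
    simp only [Function.Involutive.coe_toPerm, hflip, sum_neg_distrib] at h
    linarith

theorem sum_sq_sum_mul_rademacher (g : α → ℝ) :
    ∑ W : Finset α, (∑ v, g v * rademacher W v) ^ 2 = 2 ^ Fintype.card α * ∑ v, g v ^ 2 := by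
  calc ∑ W : Finset α, (∑ v, g v * rademacher W v) ^ 2
      = ∑ W : Finset α, ∑ v, ∑ w, g v * g w * (rademacher W v * rademacher W w) := by
        refine sum_congr rfl fun W _ ↦ ?_
        rw [sq, sum_mul_sum]
        exact sum_congr rfl fun v _ ↦ sum_congr rfl fun w _ ↦ by ring
    _ = ∑ v, ∑ w, g v * g w * ∑ W : Finset α, rademacher W v * rademacher W w := by
        rw [sum_comm]
        refine sum_congr rfl fun v _ ↦ ?_
        rw [sum_comm]
        simp_rw [mul_sum]
    _ = 2 ^ Fintype.card α * ∑ v, g v ^ 2 := by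
        simp [sum_rademacher_mul_rademacher, mul_sum, sq, mul_comm]

theorem sum_sq_two_mul_card_inter_sub_le (s t : Finset α) :
    ∑ W : Finset α, (2 * ((#(s ∩ W) : ℝ) - #(t ∩ W)) - (#s - #t)) ^ 2 ≤
      (2 : ℝ) ^ Fintype.card α * Fintype.card α := by
  set g : α → ℝ := fun v ↦ (if v ∈ s then 1 else 0) - (if v ∈ t then 1 else 0)
  have hg : ∀ W, ∑ v, g v * rademacher W v = 2 * ((#(s ∩ W) : ℝ) - #(t ∩ W)) - (#s - #t) :=
    fun W ↦ by
      simp only [g, sub_mul, ite_mul, one_mul, zero_mul, sum_sub_distrib, sum_ite_mem,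
        univ_inter, sum_rademacher]
      ring
  have hg_sq : ∀ v, g v ^ 2 ≤ 1 := fun v ↦ by simp only [g]; split_ifs <;> norm_num
  simp_rw [← hg, sum_sq_sum_mul_rademacher]
  gcongr
  calc ∑ v, g v ^ 2 ≤ ∑ _v : α, (1 : ℝ) := sum_le_sum fun v _ ↦ hg_sq v
    _ = Fintype.card α := by simp

theorem card_filter_three_sqrt_lt_abs_le (s t : Finset α) (hα : 0 < Fintype.card α)
    (hst : |(#s : ℝ) - #t| ≤ √(Fintype.card α)) :
    (#{W : Finset α | ¬ |(#(s ∩ W) : ℝ) - #(t ∩ W)| ≤ 3 * √(Fintype.card α)} : ℝ) ≤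
      2 ^ Fintype.card α / 25 := by
  set n := Fintype.card α
  set F : Finset α → ℝ := fun W ↦ 2 * ((#(s ∩ W) : ℝ) - #(t ∩ W)) - (#s - #t)
  have hsub : ({W : Finset α | ¬ |(#(s ∩ W) : ℝ) - #(t ∩ W)| ≤ 3 * √n} : Finset _) ⊆
      ({W | 25 * n < F W ^ 2} : Finset _) := by
    intro W
    simp only [mem_filter, mem_univ, true_and, not_le]
    intro hW
    -- `2 (#(s ∩ W) - #(t ∩ W)) = F W + (#s - #t)` and `|#s - #t| ≤ √n`
    have hF : 5 * √n < |F W| := by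
      have := abs_sub_abs_le_abs_sub (2 * ((#(s ∩ W) : ℝ) - #(t ∩ W))) (#s - #t)
      rw [abs_mul, abs_two] at this
      linarith
    have hF2 := pow_lt_pow_left₀ hF (by positivity) two_ne_zero
    rw [sq_abs, mul_pow, Real.sq_sqrt (Nat.cast_nonneg n)] at hF2
    linarith
  calc (#{W : Finset α | ¬ |(#(s ∩ W) : ℝ) - #(t ∩ W)| ≤ 3 * √n} : ℝ)
      ≤ #{W : Finset α | 25 * n < F W ^ 2} := by exact_mod_cast card_le_card hsub
    _ ≤ 2 ^ n / 25 := by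
        refine card_filter_lt_le_of_sum_le _ (fun _ ↦ sq_nonneg _) (by positivity) ?_
        calc ∑ W, F W ^ 2 ≤ 2 ^ n * n := sum_sq_two_mul_card_inter_sub_le s t
          _ = 25 * n * (2 ^ n / 25) := by ring

end SetFamily

section Collisions

variable {ι β : Type*} [DecidableEq β]

theorem card_sq_le_card_image_mul (S : Finset ι) (f : ι → β) :
    #S ^ 2 ≤ #(S.image f) * #{p ∈ S ×ˢ S | f p.1 = f p.2} := by
  have hpairs : #{p ∈ S ×ˢ S | f p.1 = f p.2} = ∑ b ∈ S.image f, #{i ∈ S | f i = b} ^ 2 := by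
    rw [card_eq_sum_card_fiberwise (f := fun p ↦ f p.1) (t := S.image f)
      fun p hp ↦ mem_image_of_mem f (mem_product.1 (mem_filter.1 hp).1).1]
    refine sum_congr rfl fun b _ ↦ ?_
    rw [sq, ← card_product]
    congr 1
    ext ⟨i, j⟩
    simp only [mem_filter, mem_product]
    grind
  rw [hpairs, card_eq_sum_card_image f S]
  exact sq_sum_le_card_mul_sum_sq

theorem card_filter_product_eq_card_add [DecidableEq ι] (S : Finset ι) (f : ι → β) :
    #{p ∈ S ×ˢ S | f p.1 = f p.2} = #S + #{p ∈ S.offDiag | f p.1 = f p.2} := by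
  rw [← diag_union_offDiag, filter_union,
    card_union_of_disjoint (disjoint_filter_filter (disjoint_diag_offDiag S)),
    filter_true_of_mem fun p hp ↦ by rw [(mem_diag.1 hp).2], diag_card]

variable [Fintype ι]

def collisions (f : ι → β) : ℕ := #{p ∈ (univ : Finset ι).offDiag | f p.1 = f p.2}

theorem sq_le_card_image_mul_of_collisions_le (f : ι → β) {S : Finset ι} {C : ℝ}
    (hS : (Fintype.card ι : ℝ) / 2 ≤ #S) (hC : (collisions f : ℝ) ≤ C) :
    ((Fintype.card ι : ℝ) / 2) ^ 2 ≤ #(S.image f) * (Fintype.card ι + C) := by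
  classical
  have hsq : (#S : ℝ) ^ 2 ≤ (#(S.image f) : ℝ) * (#S + collisions f) := by
    have h := card_sq_le_card_image_mul S f
    rw [card_filter_product_eq_card_add] at h
    have hoff : #{p ∈ S.offDiag | f p.1 = f p.2} ≤ collisions f :=
      card_le_card (filter_subset_filter _ (offDiag_mono (subset_univ S)))
    exact_mod_cast h.trans (Nat.mul_le_mul_left _ (Nat.add_le_add_left hoff _))
  calc ((Fintype.card ι : ℝ) / 2) ^ 2 ≤ (#S : ℝ) ^ 2 := by gcongr
    _ ≤ (#(S.image f) : ℝ) * (#S + collisions f) := hsq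
    _ ≤ #(S.image f) * (Fintype.card ι + C) := by
        gcongr
        exact_mod_cast card_le_univ S

variable {Ω : Type*} [Fintype Ω] (z : ι → Ω → β)

theorem card_filter_lt_collisions_le {q : ℝ} (hq : 0 < q) (hι : 0 < Fintype.card ι)
    (hz : ∀ i j, i ≠ j → (#{ω | z i ω = z j ω} : ℝ) ≤ Fintype.card Ω / q) :
    (#{ω | 16 * (Fintype.card ι : ℝ) ^ 2 / q < collisions (z · ω)} : ℝ) ≤
      Fintype.card Ω / 16 := by
  refine card_filter_lt_le_of_sum_le _ (fun _ ↦ Nat.cast_nonneg _) (by positivity) ?_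
  have hsum : ∑ ω, collisions (z · ω) =
      ∑ p ∈ (univ : Finset ι).offDiag, #{ω | z p.1 ω = z p.2 ω} :=
    sum_card_filter_comm _ fun (p : ι × ι) ω ↦ z p.1 ω = z p.2 ω
  calc ∑ ω, (collisions (z · ω) : ℝ)
      = ∑ p ∈ (univ : Finset ι).offDiag, (#{ω | z p.1 ω = z p.2 ω} : ℝ) := by
        exact_mod_cast hsum
    _ ≤ ∑ _p ∈ (univ : Finset ι).offDiag, (Fintype.card Ω / q : ℝ) :=
        sum_le_sum fun p hp ↦ hz p.1 p.2 (mem_offDiag.1 hp).2.2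
    _ ≤ (Fintype.card ι : ℝ) ^ 2 * (Fintype.card Ω / q) := by
        rw [sum_const, nsmul_eq_mul]
        gcongr
        have h : #(univ : Finset ι).offDiag ≤ Fintype.card ι ^ 2 := by
          rw [offDiag_card, card_univ, sq]
          exact Nat.sub_le _ _
        exact_mod_cast h
    _ = 16 * (Fintype.card ι : ℝ) ^ 2 / q * (Fintype.card Ω / 16) := by ring

theorem card_filter_lt_card_filter_not_le (good : ι → Ω → Prop) [∀ i ω, Decidable (good i ω)]
    (hι : 0 < Fintype.card ι) (hgood : ∀ i, (#{ω | ¬ good i ω} : ℝ) ≤ Fintype.card Ω / 25) :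
    (#{ω | (Fintype.card ι : ℝ) / 2 < #{i | ¬ good i ω}} : ℝ) ≤ 2 * Fintype.card Ω / 25 := by
  refine card_filter_lt_le_of_sum_le _ (fun _ ↦ Nat.cast_nonneg _) (by positivity) ?_
  calc ∑ ω, (#{i | ¬ good i ω} : ℝ) = ∑ i, (#{ω | ¬ good i ω} : ℝ) := by
        exact_mod_cast sum_card_filter_comm univ fun i ω ↦ ¬ good i ω
    _ ≤ ∑ _i : ι, (Fintype.card Ω / 25 : ℝ) := sum_le_sum fun i _ ↦ hgood i
    _ = Fintype.card ι / 2 * (2 * Fintype.card Ω / 25) := by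
        rw [sum_const, card_univ, nsmul_eq_mul]; ring

theorem le_card_filter_le_card_image (good : ι → Ω → Prop) [∀ i ω, Decidable (good i ω)]
    {q : ℝ} (hq : 0 < q) (hι : 0 < Fintype.card ι)
    (hz : ∀ i j, i ≠ j → (#{ω | z i ω = z j ω} : ℝ) ≤ Fintype.card Ω / q)
    (hgood : ∀ i, (#{ω | ¬ good i ω} : ℝ) ≤ Fintype.card Ω / 25) :
    3 / 4 * (Fintype.card Ω : ℝ) ≤
      #{ω | Fintype.card ι * q / (4 * (q + 16 * Fintype.card ι)) ≤
        #(({i | good i ω} : Finset ι).image (z · ω))} := by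
  classical
  set k : ℝ := (Fintype.card ι : ℝ)
  set bad : Finset Ω := ({ω | 16 * k ^ 2 / q < collisions (z · ω)} : Finset Ω) ∪
    ({ω | k / 2 < #{i | ¬ good i ω}} : Finset Ω)
  have hbad : (#bad : ℝ) ≤ Fintype.card Ω / 16 + 2 * Fintype.card Ω / 25 := by
    refine (Nat.cast_le.2 (card_union_le _ _)).trans ?_
    push_cast
    exact add_le_add (card_filter_lt_collisions_le z hq hι hz)
      (card_filter_lt_card_filter_not_le good hι hgood)
  have hgood_of_not_bad : ∀ ω ∉ bad,
      k * q / (4 * (q + 16 * k)) ≤ #(({i | good i ω} : Finset ι).image (z · ω)) := by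
    intro ω hω
    simp only [bad, mem_union, mem_filter, mem_univ, true_and, not_or, not_lt] at hω
    have hS : k / 2 ≤ #({i | good i ω} : Finset ι) := by
      have h := card_filter_add_card_filter_not (s := univ) (good · ω)
      rw [card_univ] at h
      have h' : (#({i | good i ω} : Finset ι) : ℝ) + #{i | ¬ good i ω} = Fintype.card ι := by
        exact_mod_cast h
      linarith [hω.2]
    have h := sq_le_card_image_mul_of_collisions_le (z · ω) hS hω.1
    have hk : 0 < k := by positivity
    rw [div_le_iff₀ (by positivity)]
    have := mul_le_mul_of_nonneg_right h (by positivity : 0 ≤ 4 * q / k)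
    calc k * q = (k / 2) ^ 2 * (4 * q / k) := by field_simp; ring
      _ ≤ _ := this
      _ = _ := by field_simp; ring
  calc 3 / 4 * (Fintype.card Ω : ℝ) ≤ Fintype.card Ω - #bad := by linarith
    _ = #badᶜ := by
        rw [sub_eq_iff_eq_add, ← Nat.cast_add, card_compl_add_card]
    _ ≤ _ := by
        gcongr
        intro ω hω
        simp only [mem_filter, mem_univ, true_and]
        exact hgood_of_not_bad ω (mem_compl.1 hω)

end Collisions

section PairStar

variable {V1 V2 : Type} [Fintype V2] [DecidableEq V2] {E : V1 → V2 → Prop}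
  [∀ a b, Decidable (E a b)] {ε : ℝ} {k : ℕ} {x : Fin (k + 1) → V1}

variable (E x) in
/-- The paper's `d^W(x_{i+1}) - d^W(x₀)`: the index `i : Fin k` stands for `i + 1 ∈ [k]`. -/
def degDiff (i : Fin k) (W : Finset V2) : ℤ := #(nbr E (x i.succ) ∩ W) - #(nbr E (x 0) ∩ W)

theorem IsPairStar.card_filter_degDiff_eq_le (hx : IsPairStar E ε k x) (hε : 0 < ε)
    (hk : k = Nat.sqrt (Fintype.card V2)) {i j : Fin k} (hij : i ≠ j) :
    (#{W | degDiff E x i W = degDiff E x j W} : ℝ) ≤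
      Fintype.card (Finset V2) / (√(ε / 2) * k) := by
  have hk0 : (0 : ℝ) < k := by exact_mod_cast i.pos
  have hsd := hx.2.2 i.succ j.succ (Fin.succ_injective _ |>.ne hij)
  have hk2 : (k : ℝ) ^ 2 ≤ Fintype.card V2 := by
    rw [hk]; exact_mod_cast Nat.sqrt_le' _
  have hq : √(ε / 2) * k ≤ √(#(symmDiff (nbr E (x i.succ)) (nbr E (x j.succ))) / 2 + 1) := by
    rw [Real.le_sqrt (by positivity) (by positivity), mul_pow, Real.sq_sqrt (by positivity)]
    nlinarith
  simp_rw [degDiff, sub_left_inj, Nat.cast_inj]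
  refine (card_filter_card_inter_eq_card_inter_le_symmDiff _ _).trans ?_
  rw [Fintype.card_finset, Nat.cast_pow, Nat.cast_two]
  gcongr

theorem IsPairStar.card_filter_three_sqrt_lt_abs_degDiff_le (hx : IsPairStar E ε k x)
    (hV2 : 0 < Fintype.card V2) (i : Fin k) :
    (#{W | ¬ ((|degDiff E x i W| : ℤ) : ℝ) ≤ 3 * √(Fintype.card V2)} : ℝ) ≤
      Fintype.card (Finset V2) / 25 := by
  have h := card_filter_three_sqrt_lt_abs_le _ _ hV2 (hx.2.1 i.succ)
  rw [Fintype.card_finset]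
  push_cast [degDiff]
  exact h

end PairStar

theorem stmt13 (ε : ℝ) (hε : 0 < ε) :
    ∃ δ : ℝ, 0 < δ ∧
      ∀ (V1 V2 : Type) [Fintype V1] [Fintype V2] [DecidableEq V2]
        (E : V1 → V2 → Prop) [∀ a b, Decidable (E a b)]
        (k : ℕ), k = Nat.sqrt (Fintype.card V2) →
        (Fintype.card V2 : ℝ) / 2 ≤ Fintype.card V1 →
        ∀ x : Fin (k + 1) → V1, IsPairStar E ε k x →
        (3 : ℝ) / 4 * 2 ^ (Fintype.card V2) ≤
          (((Finset.univ : Finset (Finset V2)).filter (fun W =>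
            δ * Real.sqrt (Fintype.card V2) ≤
              ((((Finset.univ : Finset (Fin k)).image (fun i =>
                    ((nbr E (x i.succ) ∩ W).card : ℤ) - ((nbr E (x 0) ∩ W).card : ℤ))).filter
                  (fun z : ℤ => ((|z| : ℤ) : ℝ) ≤ 3 * Real.sqrt (Fintype.card V2))).card : ℝ))).card : ℝ) := by
  set c := √(ε / 2)
  have hc : 0 < c := by positivity
  refine ⟨c / (8 * (c + 16)), by positivity, ?_⟩
  intro V1 V2 _ _ _ E _ k hk _ x hx
  rcases Nat.eq_zero_or_pos k with rfl | hk0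
  · norm_num [Nat.sqrt_eq_zero.1 hk.symm]
  have hV2 : 0 < Fintype.card V2 := Nat.sqrt_pos.1 (hk ▸ hk0)
  have hsqrt : √(Fintype.card V2) ≤ 2 * k := by
    have h := hk ▸ Real.real_sqrt_lt_nat_sqrt_succ (a := Fintype.card V2)
    have h1 : (1 : ℝ) ≤ k := by exact_mod_cast hk0
    linarith
  have hδ : c / (8 * (c + 16)) * √(Fintype.card V2) ≤ k * (c * k) / (4 * (c * k + 16 * k)) := by
    rw [show (k : ℝ) * (c * k) / (4 * (c * k + 16 * k)) = c / (8 * (c + 16)) * (2 * k) by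
      field_simp; ring]
    gcongr
  have hmain := le_card_filter_le_card_image (degDiff E x)
    (fun i W ↦ ((|degDiff E x i W| : ℤ) : ℝ) ≤ 3 * √(Fintype.card V2)) (q := c * k)
    (by positivity) (by simpa using hk0) (fun i j hij ↦ hx.card_filter_degDiff_eq_le hε hk hij)
    (hx.card_filter_three_sqrt_lt_abs_degDiff_le hV2)
  rw [Fintype.card_finset, Fintype.card_fin, Nat.cast_pow, Nat.cast_two] at hmain
  refine hmain.trans (Nat.cast_le.2 (card_le_card fun W ↦ ?_))
  simp only [mem_filter, mem_univ, true_and, filter_image]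
  exact hδ.trans
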